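/- Let X_i, X_j be independent random elements of 𝒳 with common law μ, let γ₀ : 𝒳 → ℝ be μ-integrable, set Δ₀ = γ₀(X_i) − γ₀(X_j), and assume P(Δ₀ = 0) = 0. Let (γ_τ)_{τ∈[0,τ̄)} be functions on 𝒳 with γ_0 = γ₀ such that sup_x |γ_τ(x) − γ₀(x) − τγ̇(x)| = o(τ) as τ ↓ 0 for some bounded function γ̇. Then the map τ ↦ E[|γ_τ(X_i) − γ_τ(X_j)|] is right-differentiable at τ = 0 with derivative E[sgn(Δ₀)(γ̇(X_i) − γ̇(X_j))]. -/

import Mathlib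

/-!
Off the null set {Δ₀ = 0}, τ ↦ |Δ_τ| is right-differentiable at 0 with derivative
sgn(Δ₀)(γ̇(X_i) − γ̇(X_j)), because the absolute value is differentiable away from 0.
The uniform expansion of γ_τ with bounded γ̇ bounds |Δ_τ| − |Δ₀| by a constant times τ for all
pairs at once, so the difference quotients are dominated by a constant and dominated
convergence moves the derivative under the integral.
-/

open MeasureTheory Filter

theorem hasDerivWithinAt_integral_of_dominated_of_lip {α E : Type*} [MeasurableSpace α]
    [NormedAddCommGroup E] [NormedSpace ℝ E] {ν : Measure α} [IsFiniteMeasure ν]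
    {F : ℝ → α → E} {F' : α → E} {s : Set ℝ} {t₀ C : ℝ}
    (hF_meas : ∀ᶠ t in nhdsWithin t₀ s, AEStronglyMeasurable (F t) ν)
    (hF_int : Integrable (F t₀) ν)
    (h_lip : ∀ᶠ t in nhdsWithin t₀ s, ∀ᵐ x ∂ν, ‖F t x - F t₀ x‖ ≤ C * |t - t₀|)
    (h_diff : ∀ᵐ x ∂ν, HasDerivWithinAt (F · x) (F' x) s t₀) :
    HasDerivWithinAt (fun t => ∫ x, F t x ∂ν) (∫ x, F' x ∂ν) s t₀ := by
  rw [hasDerivWithinAt_iff_tendsto_slope]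
  have hle : nhdsWithin t₀ (s \ {t₀}) ≤ nhdsWithin t₀ s := nhdsWithin_mono _ Set.sdiff_subset
  have hint : ∀ᶠ t in nhdsWithin t₀ s, Integrable (fun x => F t x - F t₀ x) ν := by
    filter_upwards [hF_meas, h_lip] with t hmeas hlip
    exact (integrable_const _).mono' (hmeas.sub hF_int.1) hlip
  have hslope : ∀ᶠ t in nhdsWithin t₀ (s \ {t₀}),
      ∫ x, slope (F · x) t₀ t ∂ν = slope (fun t => ∫ x, F t x ∂ν) t₀ t := by
    filter_upwards [hle hint] with t ht
    have hFt : Integrable (F t) ν := (ht.add hF_int).congr (.of_forall fun x => sub_add_cancel _ _)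
    simp only [slope_def_module, integral_smul, integral_sub hFt hF_int]
  refine (tendsto_integral_filter_of_dominated_convergence (fun _ => C) ?_ ?_
    (integrable_const C) (h_diff.mono fun x hx => hasDerivWithinAt_iff_tendsto_slope.1 hx)).congr'
    hslope
  · filter_upwards [hle hF_meas] with t ht
    simp only [slope_def_module]
    exact (ht.sub hF_int.1).const_smul _
  · filter_upwards [hle h_lip, self_mem_nhdsWithin] with t hlip ht
    filter_upwards [hlip] with x hx
    have hpos : 0 < |t - t₀| := abs_pos.2 (sub_ne_zero.2 ht.2)
    rw [slope_def_module, norm_smul, norm_inv, Real.norm_eq_abs, inv_mul_le_iff₀ hpos, mul_comm]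
    exact hx

theorem Real.sign_eq_signType_sign (x : ℝ) : Real.sign x = (SignType.sign x : ℝ) := by
  rcases lt_trichotomy x 0 with hx | rfl | hx
  · simp [Real.sign_of_neg hx, hx]
  · simp
  · simp [Real.sign_of_pos hx, hx]

theorem hasDerivWithinAt_Ioi_zero_of_abs_sub_le {f : ℝ → ℝ} {c : ℝ}
    (h : ∀ ε > 0, ∃ δ > 0, ∀ τ : ℝ, 0 < τ → τ < δ → |f τ - f 0 - τ * c| ≤ ε * τ) :
    HasDerivWithinAt f c (Set.Ioi 0) 0 := by
  refine hasDerivWithinAt_iff_isLittleO.2 (Asymptotics.isLittleO_iff.2 fun ε hε => ?_)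
  obtain ⟨δ, hδ, hf⟩ := h ε hε
  filter_upwards [Ioo_mem_nhdsGT hδ] with τ ⟨hτ, hτδ⟩
  simpa [abs_of_pos hτ] using hf τ hτ hτδ

theorem abs_abs_sub_sub_abs_sub_le (a a' b b' : ℝ) :
    |(|a' - b'| - |a - b|)| ≤ |a' - a| + |b' - b| :=
  calc |(|a' - b'| - |a - b|)| ≤ |(a' - a) - (b' - b)| :=
        (abs_abs_sub_abs_le_abs_sub _ _).trans_eq (congrArg _ (by ring))
    _ ≤ |a' - a| + |b' - b| := abs_sub _ _

theorem right_deriv_expected_abs_fitted_value_gap_general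
    {𝒳 : Type*} [MeasurableSpace 𝒳] (μ : Measure 𝒳) [IsProbabilityMeasure μ]
    (γ : ℝ → 𝒳 → ℝ) (γ₀ γdot : 𝒳 → ℝ) (M : ℝ)
    (hγ0 : γ 0 = γ₀)
    (hγ₀int : Integrable γ₀ μ)
    (hγmeas : ∀ τ, Measurable (γ τ))
    (hγdotbdd : ∀ x, |γdot x| ≤ M)
    (hpath : ∀ ε > 0, ∃ δ > 0, ∀ τ : ℝ, 0 < τ → τ < δ →
      ∀ x, |γ τ x - γ₀ x - τ * γdot x| ≤ ε * τ)
    (hzero : (μ.prod μ) {p : 𝒳 × 𝒳 | γ₀ p.1 - γ₀ p.2 = 0} = 0) :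
    HasDerivWithinAt
      (fun τ : ℝ => ∫ p : 𝒳 × 𝒳, |γ τ p.1 - γ τ p.2| ∂(μ.prod μ))
      (∫ p : 𝒳 × 𝒳, Real.sign (γ₀ p.1 - γ₀ p.2) * (γdot p.1 - γdot p.2) ∂(μ.prod μ))
      (Set.Ici 0) 0 := by
  subst hγ0
  have hderiv (x : 𝒳) : HasDerivWithinAt (γ · x) (γdot x) (Set.Ioi 0) 0 :=
    hasDerivWithinAt_Ioi_zero_of_abs_sub_le fun ε hε =>
      (hpath ε hε).imp fun _ ⟨hδ, h⟩ => ⟨hδ, fun τ h₁ h₂ => h τ h₁ h₂ x⟩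
  obtain ⟨δ, hδ, hclose⟩ := hpath 1 one_pos
  have hlip : ∀ τ, 0 < τ → τ < δ → ∀ x, |γ τ x - γ 0 x| ≤ (1 + M) * τ := by
    intro τ hτ hτδ x
    have hdot : |τ * γdot x| ≤ τ * M := by
      rw [abs_mul, abs_of_pos hτ]; exact mul_le_mul_of_nonneg_left (hγdotbdd x) hτ.le
    linarith [hclose τ hτ hτδ x, abs_sub_abs_le_abs_sub (γ τ x - γ 0 x) (τ * γdot x)]
  have hae : ∀ᵐ p ∂(μ.prod μ), γ 0 p.1 - γ 0 p.2 ≠ 0 := measure_eq_zero_iff_ae_notMem.1 hzero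
  simp only [Real.sign_eq_signType_sign, ← hasDerivWithinAt_Ioi_iff_Ici]
  refine hasDerivWithinAt_integral_of_dominated_of_lip (C := 2 * (1 + M))
    (.of_forall fun τ => by fun_prop) ((hγ₀int.comp_fst μ).sub (hγ₀int.comp_snd μ)).abs ?_
    (hae.mono fun p hp => (hasDerivAt_abs hp).comp_hasDerivWithinAt
      (h := fun τ => γ τ p.1 - γ τ p.2) 0 ((hderiv p.1).sub (hderiv p.2)))
  filter_upwards [Ioo_mem_nhdsGT hδ] with τ ⟨hτ, hτδ⟩
  refine .of_forall fun p => ?_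
  rw [Real.norm_eq_abs, sub_zero, abs_of_pos hτ]
  linarith [abs_abs_sub_sub_abs_sub_le (γ 0 p.1) (γ τ p.1) (γ 0 p.2) (γ τ p.2),
    hlip τ hτ hτδ p.1, hlip τ hτ hτδ p.2]

theorem right_deriv_expected_abs_fitted_value_gap
    {𝒳 : Type*} [MeasurableSpace 𝒳] (μ : Measure 𝒳) [IsProbabilityMeasure μ]
    (τbar : ℝ) (hτbar : 0 < τbar)
    (γ : ℝ → 𝒳 → ℝ) (γ₀ γdot : 𝒳 → ℝ) (M : ℝ)
    (hγ0 : γ 0 = γ₀)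
    (hγ₀meas : Measurable γ₀)
    (hγ₀int : Integrable γ₀ μ)
    (hγmeas : ∀ τ, Measurable (γ τ))
    (hγdotmeas : Measurable γdot)
    (hγdotbdd : ∀ x, |γdot x| ≤ M)
    (hpath : ∀ ε > 0, ∃ δ > 0, ∀ τ : ℝ, 0 < τ → τ < δ →
      ∀ x, |γ τ x - γ₀ x - τ * γdot x| ≤ ε * τ)
    (hzero : (μ.prod μ) {p : 𝒳 × 𝒳 | γ₀ p.1 - γ₀ p.2 = 0} = 0) :
    HasDerivWithinAt
      (fun τ : ℝ => ∫ p : 𝒳 × 𝒳, |γ τ p.1 - γ τ p.2| ∂(μ.prod μ))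
      (∫ p : 𝒳 × 𝒳, Real.sign (γ₀ p.1 - γ₀ p.2) * (γdot p.1 - γdot p.2) ∂(μ.prod μ))
      (Set.Ici 0) 0 :=
  right_deriv_expected_abs_fitted_value_gap_general μ γ γ₀ γdot M hγ0 hγ₀int hγmeas hγdotbdd hpath
    hzero
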